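/- For all n ≥ 2, the supremum over measurable nonnegative functions f₁,…,fₙ on [0,1]^{n-1} of ∫_{[0,1]^n} ∏_{i=1}^n ε(fᵢ(x_{-i}) xᵢ) dΛ^n equals 1/2. (The continuous Levine hat game has optimal winning probability 1/2.) -/

import Mathlib

/-!
Since `⌊t + 1⌋` and `⌊t⌋` have opposite parities, `ε(t) + ε(t + 1) = 1`; as `ε` vanishes on
`[0, 1)`, this gives `E(a) + E(a + 1) = a` for `E(a) = ∫₀^a ε`, and since
`0 ≤ E(a + 1) - E(a) ≤ 1`, `(a - 1)/2 ≤ E(a) ≤ a/2`. Hence a single player who scales her own number by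
`a ≥ 0` wins with probability `∫₀¹ ε(a t) dt = E(a)/a ∈ [1/2 - 1/(2a), 1/2]`; integrating out her
coordinate first and bounding the product of the `ε`'s by her factor, the team can never beat
`1/2`.

Conversely, if every player uses `fᵢ(x₋ᵢ) = c ∏_{j ≠ i} xⱼ`, all players compute the same number
`c ∏ⱼ xⱼ`, so they win or lose together and the team wins with the probability of one player.
For almost every `x₋ᵢ` her factor `c ∏_{j ≠ i} xⱼ` tends to `∞` with `c`, so by dominated
convergence that probability tends to `1/2`.
-/

open MeasureTheory

noncomputable def eps (t : ℝ) : ℝ := (⌊t⌋ : ℝ) - 2 * (⌊t / 2⌋ : ℝ)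

open Set Filter Topology

lemma eps_eq_ite (t : ℝ) : eps t = if Odd ⌊t⌋ then 1 else 0 := by
  have h : ⌊t / 2⌋ = ⌊t⌋ / 2 := mod_cast Int.floor_div_natCast t 2
  have hmod : eps t = ((⌊t⌋ % 2 : ℤ) : ℝ) := by
    rw [eps, h, Int.emod_def]; push_cast; ring
  rw [hmod]
  split_ifs with ho
  · simp [Int.odd_iff.mp ho]
  · simp [Int.not_odd_iff.mp ho]

lemma eps_nonneg (t : ℝ) : 0 ≤ eps t := by rw [eps_eq_ite]; split_ifs <;> norm_num

lemma eps_le_one (t : ℝ) : eps t ≤ 1 := by rw [eps_eq_ite]; split_ifs <;> norm_num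

lemma abs_eps_le_one (t : ℝ) : |eps t| ≤ 1 := abs_le.mpr ⟨by linarith [eps_nonneg t], eps_le_one t⟩

lemma eps_pow {n : ℕ} (hn : n ≠ 0) (t : ℝ) : eps t ^ n = eps t := by
  rw [eps_eq_ite]; split_ifs <;> simp [hn]

lemma eps_add_one (t : ℝ) : eps (t + 1) = 1 - eps t := by
  simp only [eps_eq_ite, Int.floor_add_one, odd_add_one, ← Int.not_odd_iff_even]
  split_ifs <;> norm_num

lemma eps_eq_zero_of_mem_Ico {t : ℝ} (ht : t ∈ Ico 0 1) : eps t = 0 := by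
  simp [eps_eq_ite, Int.floor_eq_zero_iff.mpr ht]

@[fun_prop]
lemma measurable_eps : Measurable eps := by
  unfold eps; fun_prop

lemma Measurable.intervalIntegrable_eps_comp {g : ℝ → ℝ} (hg : Measurable g) (a b : ℝ) :
    IntervalIntegrable (fun t => eps (g t)) volume a b := by
  refine intervalIntegrable_const (c := (1 : ℝ)) |>.mono_fun
    (measurable_eps.comp hg).aestronglyMeasurable (ae_of_all _ fun _ => ?_)
  simpa using abs_eps_le_one _

lemma eps_intervalIntegrable (a b : ℝ) : IntervalIntegrable eps volume a b :=
  measurable_id.intervalIntegrable_eps_comp a b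

lemma integral_eps_zero_one : ∫ t in (0 : ℝ)..1, eps t = 0 := by
  rw [intervalIntegral.integral_of_le zero_le_one, integral_Ioc_eq_integral_Ioo]
  exact setIntegral_eq_zero_of_forall_eq_zero fun t ht => eps_eq_zero_of_mem_Ico ⟨ht.1.le, ht.2⟩

lemma integral_eps_add_integral_eps_add_one (a : ℝ) :
    (∫ t in (0 : ℝ)..a, eps t) + ∫ t in (0 : ℝ)..(a + 1), eps t = a := by
  have hshift : ∫ t in (0 : ℝ)..a, eps (t + 1) = ∫ t in (0 : ℝ)..(a + 1), eps t := by
    rw [intervalIntegral.integral_comp_add_right, zero_add,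
      ← intervalIntegral.integral_add_adjacent_intervals (eps_intervalIntegrable 0 1)
        (eps_intervalIntegrable 1 (a + 1)), integral_eps_zero_one, zero_add]
  rw [← hshift, ← intervalIntegral.integral_add (eps_intervalIntegrable 0 a)]
  · simp [eps_add_one]
  · exact (measurable_add_const 1).intervalIntegrable_eps_comp 0 a

lemma integral_eps_le_integral_eps_add_one (a : ℝ) :
    ∫ t in (0 : ℝ)..a, eps t ≤ ∫ t in (0 : ℝ)..(a + 1), eps t := by
  rw [← intervalIntegral.integral_add_adjacent_intervals (eps_intervalIntegrable 0 a)
    (eps_intervalIntegrable a (a + 1))]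
  have hstep : 0 ≤ ∫ t in a..(a + 1), eps t :=
    intervalIntegral.integral_nonneg (by linarith) fun t _ => eps_nonneg t
  linarith

lemma integral_eps_add_one_le (a : ℝ) :
    ∫ t in (0 : ℝ)..(a + 1), eps t ≤ (∫ t in (0 : ℝ)..a, eps t) + 1 := by
  rw [← intervalIntegral.integral_add_adjacent_intervals (eps_intervalIntegrable 0 a)
    (eps_intervalIntegrable a (a + 1))]
  have hstep := intervalIntegral.integral_mono_on (by linarith : a ≤ a + 1)
    (eps_intervalIntegrable _ _) intervalIntegrable_const fun t _ => eps_le_one t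
  simp only [intervalIntegral.integral_const, add_sub_cancel_left, smul_eq_mul, mul_one] at hstep
  linarith

lemma integral_eps_le_half (a : ℝ) : ∫ t in (0 : ℝ)..a, eps t ≤ a / 2 := by
  linarith [integral_eps_add_integral_eps_add_one a, integral_eps_le_integral_eps_add_one a]

lemma sub_one_div_two_le_integral_eps (a : ℝ) : (a - 1) / 2 ≤ ∫ t in (0 : ℝ)..a, eps t := by
  linarith [integral_eps_add_integral_eps_add_one a, integral_eps_add_one_le a]

noncomputable def epsAvg (a : ℝ) : ℝ := ∫ t in Icc (0 : ℝ) 1, eps (a * t)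

instance : IsProbabilityMeasure ((volume : Measure ℝ).restrict (Icc 0 1)) :=
  ⟨by simp⟩

lemma epsAvg_eq_inv_mul {a : ℝ} (ha : a ≠ 0) : epsAvg a = a⁻¹ * ∫ t in (0 : ℝ)..a, eps t := by
  rw [epsAvg, integral_Icc_eq_integral_Ioc, ← intervalIntegral.integral_of_le zero_le_one,
    intervalIntegral.integral_comp_mul_left eps ha, mul_zero, mul_one, smul_eq_mul]

lemma epsAvg_nonneg (a : ℝ) : 0 ≤ epsAvg a :=
  setIntegral_nonneg measurableSet_Icc fun _ _ => eps_nonneg _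

lemma epsAvg_le_half {a : ℝ} (ha : 0 ≤ a) : epsAvg a ≤ 1 / 2 := by
  rcases ha.eq_or_lt with rfl | ha
  · simp [epsAvg, eps]
  rw [epsAvg_eq_inv_mul ha.ne', inv_mul_le_iff₀ ha]
  linarith [integral_eps_le_half a]

lemma half_sub_le_epsAvg {a : ℝ} (ha : 0 < a) : 1 / 2 - 1 / (2 * a) ≤ epsAvg a := by
  rw [epsAvg_eq_inv_mul ha.ne']
  calc 1 / 2 - 1 / (2 * a) = a⁻¹ * ((a - 1) / 2) := by field_simp
    _ ≤ _ := mul_le_mul_of_nonneg_left (sub_one_div_two_le_integral_eps a) (by positivity)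

lemma tendsto_epsAvg_atTop : Tendsto epsAvg atTop (𝓝 (1 / 2)) := by
  have hlow : Tendsto (fun a : ℝ => 1 / 2 - 1 / (2 * a)) atTop (𝓝 (1 / 2)) := by
    have h : Tendsto (fun a : ℝ => 2 * a) atTop atTop := tendsto_id.const_mul_atTop two_pos
    simpa using tendsto_const_nhds.sub h.inv_tendsto_atTop
  refine tendsto_of_tendsto_of_tendsto_of_le_of_le' hlow tendsto_const_nhds ?_ ?_
  · filter_upwards [eventually_gt_atTop 0] with a ha using half_sub_le_epsAvg ha
  · filter_upwards [eventually_ge_atTop 0] with a ha using epsAvg_le_half ha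

lemma measurable_epsAvg : Measurable epsAvg :=
  (measurable_eps.comp (measurable_fst.mul measurable_snd)).stronglyMeasurable
    |>.integral_prod_right' |>.measurable

section Cube

variable {ι : Type*} [Fintype ι]

theorem integral_pi_eq_integral_integral_eval {α : Type*} [MeasurableSpace α] [DecidableEq ι]
    (μ : Measure α) [SigmaFinite μ] (i : ι) {g : ({j // j ≠ i} → α) → α → ℝ}
    (hg : Integrable (Function.uncurry g) ((Measure.pi fun _ => μ).prod μ)) :
    ∫ x : ι → α, g (fun j => x j.1) (x i) ∂Measure.pi (fun _ => μ) =
      ∫ y, ∫ t, g y t ∂μ ∂Measure.pi (fun _ => μ) := by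
  let _ : Unique {j // ¬ j ≠ i} :=
    ⟨⟨⟨i, not_not_intro rfl⟩⟩, fun j => Subtype.ext (not_not.mp j.2)⟩
  let e := (MeasurableEquiv.piEquivPiSubtypeProd (fun _ => α) (· ≠ i)).trans
    (MeasurableEquiv.prodCongr (MeasurableEquiv.refl _) (MeasurableEquiv.piUnique _))
  have he : MeasurePreserving e (Measure.pi fun _ => μ) ((Measure.pi fun _ => μ).prod μ) :=
    (measurePreserving_piEquivPiSubtypeProd _ _).trans
      ((MeasurePreserving.id _).prod (measurePreserving_piUnique _))
  exact (he.integral_comp' (Function.uncurry g)).trans (integral_prod _ hg)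

lemma volume_restrict_unitCube :
    (volume : Measure (ι → ℝ)).restrict (univ.pi fun _ => Icc 0 1) =
      Measure.pi fun _ => volume.restrict (Icc 0 1) := by
  rw [volume_pi, Measure.restrict_pi_pi]

instance :
    IsProbabilityMeasure ((volume : Measure (ι → ℝ)).restrict (univ.pi fun _ => Icc 0 1)) := by
  rw [volume_restrict_unitCube]; infer_instance

lemma setIntegral_unitCube_eps_eq_setIntegral_epsAvg [DecidableEq ι] (i : ι) {F : ({j // j ≠ i} → ℝ) → ℝ}
    (hF : Measurable F) :
    ∫ x in univ.pi (fun _ : ι => Icc (0 : ℝ) 1), eps (F (fun j => x j.1) * x i) =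
      ∫ y in univ.pi (fun _ => Icc (0 : ℝ) 1), epsAvg (F y) := by
  rw [volume_restrict_unitCube, volume_restrict_unitCube]
  refine integral_pi_eq_integral_integral_eval _ i (g := fun y t => eps (F y * t)) ?_
  have hg : Measurable fun z : ({j // j ≠ i} → ℝ) × ℝ => eps (F z.1 * z.2) := by fun_prop
  exact .of_bound hg.aestronglyMeasurable 1 (ae_of_all _ fun _ => abs_eps_le_one _)

lemma ae_prod_abs_pos_unitCube :
    ∀ᵐ y ∂(volume : Measure (ι → ℝ)).restrict (univ.pi fun _ => Icc 0 1), 0 < ∏ j, |y j| := by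
  rw [volume_restrict_unitCube]
  filter_upwards [ae_all_iff.mpr fun j => Measure.ae_eval_ne _ j 0] with y hy
  exact Finset.prod_pos fun j _ => abs_pos.mpr (hy j)

end Cube

section Game

variable {ι : Type*} [Fintype ι]

noncomputable def levineWinProb (f : (i : ι) → ({j : ι // j ≠ i} → ℝ) → ℝ) : ℝ :=
  ∫ x in univ.pi (fun _ : ι => Icc (0 : ℝ) 1), ∏ i, eps (f i (fun j => x j.1) * x i)

theorem levineWinProb_le_half [DecidableEq ι] (f : (i : ι) → ({j : ι // j ≠ i} → ℝ) → ℝ) (i : ι)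
    (hfi : Measurable (f i)) (hfi₀ : ∀ y, 0 ≤ f i y) : levineWinProb f ≤ 1 / 2 := by
  have hsingle : Measurable fun x : ι → ℝ => eps (f i (fun j => x j.1) * x i) := by fun_prop
  calc levineWinProb f
      ≤ ∫ x in univ.pi (fun _ : ι => Icc (0 : ℝ) 1), eps (f i (fun j => x j.1) * x i) := by
        refine integral_mono_of_nonneg (ae_of_all _ fun x => ?_)
          (.of_bound hsingle.aestronglyMeasurable 1 (ae_of_all _ fun _ => abs_eps_le_one _))
          (ae_of_all _ fun x => ?_)
        · exact Finset.prod_nonneg fun _ _ => eps_nonneg _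
        · dsimp only
          rw [Fintype.prod_eq_mul_prod_subtype_ne _ i]
          exact mul_le_of_le_one_right (eps_nonneg _)
            (Finset.prod_le_one (fun _ _ => eps_nonneg _) fun _ _ => eps_le_one _)
    _ = ∫ y in univ.pi (fun _ => Icc (0 : ℝ) 1), epsAvg (f i y) :=
        setIntegral_unitCube_eps_eq_setIntegral_epsAvg i hfi
    _ ≤ ∫ _ in univ.pi (fun _ : {j // j ≠ i} => Icc (0 : ℝ) 1), (1 / 2 : ℝ) :=
        integral_mono_of_nonneg (ae_of_all _ fun _ => epsAvg_nonneg _) (integrable_const _)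
          (ae_of_all _ fun y => epsAvg_le_half (hfi₀ y))
    _ = 1 / 2 := by rw [integral_const, probReal_univ, one_smul]

def productStrategy [DecidableEq ι] (c : ℝ) (i : ι) (y : {j : ι // j ≠ i} → ℝ) : ℝ := c * ∏ j, |y j|

lemma measurable_productStrategy [DecidableEq ι] (c : ℝ) (i : ι) :
    Measurable (productStrategy c i) := by
  unfold productStrategy; fun_prop

lemma productStrategy_nonneg [DecidableEq ι] {c : ℝ} (hc : 0 ≤ c) (i : ι)
    (y : {j : ι // j ≠ i} → ℝ) : 0 ≤ productStrategy c i y :=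
  mul_nonneg hc (Finset.prod_nonneg fun _ _ => abs_nonneg _)

lemma productStrategy_mul_eval [DecidableEq ι] (c : ℝ) (i : ι) {x : ι → ℝ} (hx : ∀ j, 0 ≤ x j) :
    productStrategy c i (fun j => x j.1) * x i = c * ∏ j, x j := by
  simp only [productStrategy, Fintype.prod_eq_mul_prod_subtype_ne _ i, abs_of_nonneg (hx _)]
  ring

lemma levineWinProb_productStrategy [DecidableEq ι] [Nonempty ι] (c : ℝ) (i : ι) :
    levineWinProb (productStrategy (ι := ι) c) =
      ∫ y in univ.pi (fun _ => Icc (0 : ℝ) 1), epsAvg (productStrategy c i y) := by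
  rw [levineWinProb, ← setIntegral_unitCube_eps_eq_setIntegral_epsAvg i (measurable_productStrategy c i)]
  refine setIntegral_congr_fun (MeasurableSet.univ_pi fun _ => measurableSet_Icc) fun x hx => ?_
  have hx₀ : ∀ j, 0 ≤ x j := fun j => (hx j (mem_univ j)).1
  simp only [productStrategy_mul_eval c _ hx₀, Finset.prod_const, Finset.card_univ]
  exact eps_pow Fintype.card_ne_zero _

theorem tendsto_levineWinProb_productStrategy [DecidableEq ι] [Nonempty ι] :
    Tendsto (fun c => levineWinProb (productStrategy (ι := ι) c)) atTop (𝓝 (1 / 2)) := by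
  let i : ι := Classical.arbitrary ι
  simp_rw [levineWinProb_productStrategy _ i]
  rw [show (1 / 2 : ℝ) = ∫ _ in univ.pi (fun _ : {j // j ≠ i} => Icc (0 : ℝ) 1), (1 / 2 : ℝ) by
    rw [integral_const, probReal_univ, one_smul]]
  have hmeas (c : ℝ) : Measurable fun y => epsAvg (productStrategy c i y) :=
    measurable_epsAvg.comp (measurable_productStrategy c i)
  refine tendsto_integral_filter_of_dominated_convergence (fun _ => 1 / 2)
    (.of_forall fun c => (hmeas c).aestronglyMeasurable) ?_ (integrable_const _) ?_
  · filter_upwards [eventually_ge_atTop 0] with c hc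
    refine ae_of_all _ fun y => ?_
    rw [Real.norm_of_nonneg (epsAvg_nonneg _)]
    exact epsAvg_le_half (productStrategy_nonneg hc i y)
  · filter_upwards [ae_prod_abs_pos_unitCube] with y hy
    exact tendsto_epsAvg_atTop.comp (tendsto_id.atTop_mul_const hy)

end Game

/-- The continuous Levine hat game has optimal winning probability `1/2`: for `n ≥ 2`,
the supremum over measurable nonnegative functions `f₁,…,fₙ` on `[0,1]^{n-1}` of
`∫_{[0,1]^n} ∏ᵢ ε(fᵢ(x_{-i}) xᵢ) dΛⁿ` equals `1/2`. -/
theorem continuous_levine_value (n : ℕ) (hn : 2 ≤ n) :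
    sSup {p : ℝ | ∃ f : (i : Fin n) → (({j : Fin n // j ≠ i} → ℝ) → ℝ),
      (∀ i, Measurable (f i)) ∧ (∀ i x, 0 ≤ f i x) ∧
      p = ∫ x in Set.univ.pi (fun _ : Fin n => Set.Icc (0 : ℝ) 1),
            ∏ i : Fin n, eps (f i (fun j => x j.1) * x i)} = 1 / 2 := by
  let i₀ : Fin n := ⟨0, by omega⟩
  have : Nonempty (Fin n) := ⟨i₀⟩
  refine IsLUB.csSup_eq ⟨?_, fun b hb => ?_⟩
    ⟨_, productStrategy 0, measurable_productStrategy 0, productStrategy_nonneg le_rfl, rfl⟩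
  · rintro p ⟨f, hf, hf₀, rfl⟩
    exact levineWinProb_le_half f i₀ (hf i₀) (hf₀ i₀)
  · refine le_of_tendsto (tendsto_levineWinProb_productStrategy (ι := Fin n)) ?_
    filter_upwards [eventually_ge_atTop 0] with c hc
    exact hb ⟨productStrategy c, measurable_productStrategy c, productStrategy_nonneg hc, rfl⟩
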